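/- arXiv:1607.00473 — 2 statements merged into one kernel-verified Lean document; each statement's English description precedes it below -/
import Mathlib

section
/- Let G be a connected bipartite simple graph on n ≥ 3 vertices with maximum degree Δ ≤ n−2 and Wiener index W. For every vertex v of G with deg(v) = Δ, putting D_v = Tr_G(v), a = 4(W − D_v − t_v Δ)(Δ+1) + 2nΔ² + nD_v + n t_v Δ and b = 4D_v² + 8 D_v t_v Δ + 4 t_v² Δ² − 8WΔ² − 4W D_v − 4W t_v Δ, one has S_𝒬(G) ≥ √(a² + 4b(1+Δ)(n−Δ−1)) / ((1+Δ)(n−Δ−1)). -/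
/-!
Let `S` be the closed neighbourhood of `v`, so `p = |S| = Δ + 1` and `q = |Sᶜ| = n - Δ - 1`, and
let `s₁₁, s₁₂, s₂₂` be the sums of the entries of `𝒬` over `S × S`, `S × Sᶜ`, `Sᶜ × Sᶜ`.
Evaluating the Rayleigh quotient of `𝒬` on a suitable rotation of the normalised indicator
vectors of `S` and `Sᶜ` shows that `S_𝒬(G)` is at least the spread of the `2 × 2` quotient
matrix, `√((s₁₁/p - s₂₂/q)² + 4 s₁₂²/(pq))`. Since `G` is bipartite, the neighbours of `v` are
pairwise at distance `2`, which gives `s₁₁ = Σ_{u ∈ S} Tr(u) + 2Δ²`; as the row sums of `𝒬` are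
`2 Tr`, the other block sums follow from `W`, and the bound is this spread rewritten.
-/

open Finset Matrix

noncomputable def distMatrix {V : Type*} [Fintype V] (G : SimpleGraph V) : Matrix V V ℝ :=
  Matrix.of fun u v => (G.dist u v : ℝ)

theorem distMatrix_isHermitian {V : Type*} [Fintype V] (G : SimpleGraph V) :
    (distMatrix G).IsHermitian := by
  show (distMatrix G)ᴴ = distMatrix G
  ext i j
  simp [distMatrix, Matrix.conjTranspose_apply, SimpleGraph.dist_comm]

noncomputable def transmission {V : Type*} [Fintype V] (G : SimpleGraph V) (v : V) : ℝ :=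
  ∑ u, (G.dist v u : ℝ)

noncomputable def distSLMatrix {V : Type*} [Fintype V] [DecidableEq V] (G : SimpleGraph V) :
    Matrix V V ℝ :=
  Matrix.diagonal (transmission G) + distMatrix G

theorem distSLMatrix_isHermitian {V : Type*} [Fintype V] [DecidableEq V] (G : SimpleGraph V) :
    (distSLMatrix G).IsHermitian :=
  (Matrix.isHermitian_diagonal _).add (distMatrix_isHermitian G)

noncomputable def maxEig {V : Type*} [Fintype V] [DecidableEq V] {A : Matrix V V ℝ}
    (hA : A.IsHermitian) : ℝ :=
  ⨆ i, hA.eigenvalues i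

noncomputable def minEig {V : Type*} [Fintype V] [DecidableEq V] {A : Matrix V V ℝ}
    (hA : A.IsHermitian) : ℝ :=
  ⨅ i, hA.eigenvalues i

noncomputable def distSpread {V : Type*} [Fintype V] [DecidableEq V] (G : SimpleGraph V) : ℝ :=
  maxEig (distMatrix_isHermitian G) - minEig (distMatrix_isHermitian G)

noncomputable def distSLSpread {V : Type*} [Fintype V] [DecidableEq V] (G : SimpleGraph V) : ℝ :=
  maxEig (distSLMatrix_isHermitian G) - minEig (distSLMatrix_isHermitian G)

section Rayleigh

lemma Matrix.vecMul_eq_star_mulVec {V : Type*} [Fintype V] (U : Matrix V V ℝ) (z : V → ℝ) :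
    z ᵥ* U = star U *ᵥ z := by
  rw [star_eq_conjTranspose, conjTranspose_eq_transpose_of_trivial, mulVec_transpose]

lemma Matrix.IsHermitian.dotProduct_mulVec_comm {V : Type*} [Fintype V] {A : Matrix V V ℝ}
    (hA : A.IsHermitian) (x y : V → ℝ) :
    y ⬝ᵥ A *ᵥ x = x ⬝ᵥ A *ᵥ y := by
  rw [dotProduct_mulVec, vecMul_eq_star_mulVec, star_eq_conjTranspose, hA.eq, dotProduct_comm]

variable {V : Type*} [Fintype V] [DecidableEq V] {A : Matrix V V ℝ}

lemma Matrix.IsHermitian.dotProduct_mulVec_eq_sum_eigenvalues (hA : A.IsHermitian) (z : V → ℝ) :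
    z ⬝ᵥ A *ᵥ z =
      ∑ j, hA.eigenvalues j * (star (hA.eigenvectorUnitary : Matrix V V ℝ) *ᵥ z) j ^ 2 := by
  conv_lhs => rw [hA.spectral_theorem, Unitary.conjStarAlgAut_apply]
  rw [← mulVec_mulVec, ← mulVec_mulVec, dotProduct_mulVec, vecMul_eq_star_mulVec]
  simp [dotProduct, mulVec_diagonal, sq, mul_left_comm]

lemma Matrix.IsHermitian.sum_sq_star_eigenvectorUnitary_mulVec (hA : A.IsHermitian)
    (z : V → ℝ) : ∑ j, (star (hA.eigenvectorUnitary : Matrix V V ℝ) *ᵥ z) j ^ 2 = z ⬝ᵥ z := by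
  simp only [sq]
  rw [← dotProduct]
  nth_rw 1 [← vecMul_eq_star_mulVec]
  rw [← dotProduct_mulVec, mulVec_mulVec, mem_unitaryGroup_iff.mp hA.eigenvectorUnitary.2,
    one_mulVec]

lemma dotProduct_mulVec_le_maxEig (hA : A.IsHermitian) {z : V → ℝ} (hz : z ⬝ᵥ z = 1) :
    z ⬝ᵥ A *ᵥ z ≤ maxEig hA := by
  rw [hA.dotProduct_mulVec_eq_sum_eigenvalues, ← mul_one (maxEig hA), ← hz,
    ← hA.sum_sq_star_eigenvectorUnitary_mulVec, mul_sum]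
  gcongr with j
  exact le_ciSup (Set.finite_range _).bddAbove j

lemma minEig_le_dotProduct_mulVec (hA : A.IsHermitian) {z : V → ℝ} (hz : z ⬝ᵥ z = 1) :
    minEig hA ≤ z ⬝ᵥ A *ᵥ z := by
  rw [hA.dotProduct_mulVec_eq_sum_eigenvalues, ← mul_one (minEig hA), ← hz,
    ← hA.sum_sq_star_eigenvectorUnitary_mulVec, mul_sum]
  gcongr with j
  exact ciInf_le (Set.finite_range _).bddBelow j

lemma sqrt_sq_add_four_mul_sq_le_maxEig_sub_minEig (hA : A.IsHermitian) {x y : V → ℝ}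
    (hx : x ⬝ᵥ x = 1) (hy : y ⬝ᵥ y = 1) (hxy : x ⬝ᵥ y = 0) :
    √((x ⬝ᵥ A *ᵥ x - y ⬝ᵥ A *ᵥ y) ^ 2 + 4 * (x ⬝ᵥ A *ᵥ y) ^ 2) ≤ maxEig hA - minEig hA := by
  set ξ : ℂ := ⟨x ⬝ᵥ A *ᵥ x - y ⬝ᵥ A *ᵥ y, 2 * x ⬝ᵥ A *ᵥ y⟩
  set c := Real.cos (ξ.arg / 2)
  set s := Real.sin (ξ.arg / 2)
  have hcs : s ^ 2 + c ^ 2 = 1 := Real.sin_sq_add_cos_sq _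
  have hyx : y ⬝ᵥ x = 0 := by rw [dotProduct_comm, hxy]
  -- `z` and `w` are the eigenvectors of the compression `!![x A x, x A y; x A y, y A y]`
  set z := c • x + s • y
  set w := s • x - c • y
  have hz : z ⬝ᵥ z = 1 := by
    simp only [z, add_dotProduct, dotProduct_add, smul_dotProduct, dotProduct_smul, hx, hy, hxy,
      hyx, smul_eq_mul]
    linear_combination hcs
  have hw : w ⬝ᵥ w = 1 := by
    simp only [w, sub_dotProduct, dotProduct_sub, smul_dotProduct, dotProduct_smul, hx, hy, hxy,
      hyx, smul_eq_mul]
    linear_combination hcs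
  have hhalf : ξ.arg = 2 * (ξ.arg / 2) := by ring
  have hcos : ‖ξ‖ * (c ^ 2 - s ^ 2) = ξ.re := by
    rw [← ξ.norm_mul_cos_arg, hhalf, Real.cos_two_mul']
  have hsin : ‖ξ‖ * (2 * s * c) = ξ.im := by
    rw [← ξ.norm_mul_sin_arg, hhalf, Real.sin_two_mul]
  have hdiff : z ⬝ᵥ A *ᵥ z - w ⬝ᵥ A *ᵥ w = ‖ξ‖ := by
    simp only [z, w, mulVec_add, mulVec_sub, mulVec_smul, add_dotProduct, dotProduct_add,
      sub_dotProduct, dotProduct_sub, smul_dotProduct, dotProduct_smul, smul_eq_mul]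
    rw [hA.dotProduct_mulVec_comm x y]
    linear_combination -(c ^ 2 - s ^ 2) * hcos - 2 * s * c * hsin + ‖ξ‖ * (s ^ 2 + c ^ 2 + 1) * hcs
  have hnorm : ‖ξ‖ = √((x ⬝ᵥ A *ᵥ x - y ⬝ᵥ A *ᵥ y) ^ 2 + 4 * (x ⬝ᵥ A *ᵥ y) ^ 2) := by
    rw [ξ.norm_eq_sqrt_sq_add_sq]
    congr 1
    simp only [ξ]
    ring
  rw [← hnorm, ← hdiff]
  exact sub_le_sub (dotProduct_mulVec_le_maxEig hA hz) (minEig_le_dotProduct_mulVec hA hw)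

end Rayleigh

namespace Matrix

variable {V : Type*}

def blockSum (A : Matrix V V ℝ) (S T : Finset V) : ℝ :=
  ∑ i ∈ S, ∑ j ∈ T, A i j

lemma IsHermitian.blockSum_comm {A : Matrix V V ℝ} (hA : A.IsHermitian) (S T : Finset V) :
    blockSum A S T = blockSum A T S :=
  sum_comm.trans (sum_congr rfl fun j _ ↦ sum_congr rfl fun i _ ↦ by simpa using hA.apply j i)

variable [Fintype V] [DecidableEq V]

lemma blockSum_compl_right (A : Matrix V V ℝ) (S T : Finset V) :
    blockSum A S Tᶜ = blockSum A S univ - blockSum A S T := by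
  simp only [blockSum, ← sum_sub_distrib, ← sum_compl_add_sum T, add_sub_cancel_right]

lemma blockSum_compl_left (A : Matrix V V ℝ) (S T : Finset V) :
    blockSum A Sᶜ T = blockSum A univ T - blockSum A S T := by
  simp only [blockSum, ← sum_compl_add_sum S, add_sub_cancel_right]

lemma IsHermitian.blockSum_compl_compl {A : Matrix V V ℝ} (hA : A.IsHermitian) (S : Finset V) :
    blockSum A Sᶜ Sᶜ = blockSum A univ univ - 2 * blockSum A S univ + blockSum A S S := by
  rw [blockSum_compl_left, blockSum_compl_right, blockSum_compl_right, hA.blockSum_comm univ S]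
  ring

lemma ite_dotProduct_ite (S T : Finset V) (c d : ℝ) :
    (fun i ↦ if i ∈ S then c else 0) ⬝ᵥ (fun j ↦ if j ∈ T then d else 0) = c * d * #(S ∩ T) := by
  simp [dotProduct, mul_comm, inter_comm]

lemma ite_dotProduct_mulVec_ite (A : Matrix V V ℝ) (S T : Finset V) (c d : ℝ) :
    (fun i ↦ if i ∈ S then c else 0) ⬝ᵥ A *ᵥ (fun j ↦ if j ∈ T then d else 0) =
      c * d * blockSum A S T := by
  simp [dotProduct, mulVec, blockSum, mul_sum, mul_comm, mul_left_comm]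

end Matrix

section Quotient

variable {V : Type*} [Fintype V] [DecidableEq V] {A : Matrix V V ℝ}

lemma sqrt_blockSum_le_maxEig_sub_minEig (hA : A.IsHermitian) {S : Finset V} (hS : S.Nonempty)
    (hSc : Sᶜ.Nonempty) :
    √((blockSum A S S / #S - blockSum A Sᶜ Sᶜ / #Sᶜ) ^ 2 +
        4 * blockSum A S Sᶜ ^ 2 / (#S * #Sᶜ)) ≤ maxEig hA - minEig hA := by
  have hp : (0 : ℝ) < #S := by exact_mod_cast hS.card_pos
  have hq : (0 : ℝ) < #Sᶜ := by exact_mod_cast hSc.card_pos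
  have hunit : ∀ T : Finset V, (0 : ℝ) < #T →
      (fun i ↦ if i ∈ T then (√(#T : ℝ))⁻¹ else 0) ⬝ᵥ
        (fun i ↦ if i ∈ T then (√(#T : ℝ))⁻¹ else 0) = 1 := by
    intro T hT
    rw [ite_dotProduct_ite, inter_self, ← mul_inv, Real.mul_self_sqrt hT.le, inv_mul_cancel₀ hT.ne']
  have horth : (fun i ↦ if i ∈ S then (√(#S : ℝ))⁻¹ else 0) ⬝ᵥ
      (fun i ↦ if i ∈ Sᶜ then (√(#Sᶜ : ℝ))⁻¹ else (0 : ℝ)) = 0 := by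
    rw [ite_dotProduct_ite, inter_compl, card_empty, Nat.cast_zero, mul_zero]
  convert sqrt_sq_add_four_mul_sq_le_maxEig_sub_minEig hA (hunit S hp) (hunit Sᶜ hq) horth
    using 2
  simp only [ite_dotProduct_mulVec_ite, ← mul_inv, Real.mul_self_sqrt hp.le,
    Real.mul_self_sqrt hq.le]
  rw [mul_pow, inv_pow, ← Real.sqrt_mul hp.le, Real.sq_sqrt (by positivity)]
  ring

end Quotient

namespace SimpleGraph

variable {V : Type*} {G : SimpleGraph V}

lemma dist_eq_two_of_adj_of_adj (hG : G.Colorable 2) {v u w : V} (hu : G.Adj v u)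
    (hw : G.Adj v w) (hne : u ≠ w) : G.dist u w = 2 := by
  obtain ⟨C⟩ := hG
  have hnadj : ¬ G.Adj u w := fun huw ↦ C.valid huw (by
    have := C.valid hu
    have := C.valid hw
    omega)
  rw [dist, ENat.toNat_eq_iff two_ne_zero, Nat.cast_ofNat, edist_eq_two_iff]
  exact ⟨hne, hnadj, v, (G.mem_commonNeighbors).mpr ⟨hu.symm, hw.symm⟩⟩

variable [Fintype V] [DecidableEq V] [DecidableRel G.Adj]

lemma card_insert_neighborFinset (v : V) : #(insert v (G.neighborFinset v)) = G.degree v + 1 := by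
  rw [card_insert_of_notMem (by simp), card_neighborFinset_eq_degree]

lemma sum_sum_dist_insert_neighborFinset (hG : G.Colorable 2) (v : V) :
    ∑ i ∈ insert v (G.neighborFinset v), ∑ j ∈ insert v (G.neighborFinset v), (G.dist i j : ℝ) =
      2 * G.degree v ^ 2 := by
  have hv : v ∉ G.neighborFinset v := by simp
  have hrow : ∀ i ∈ G.neighborFinset v,
      ∑ j ∈ insert v (G.neighborFinset v), (G.dist i j : ℝ) = 2 * G.degree v - 1 := by
    intro i hi
    rw [mem_neighborFinset] at hi
    have hdist : ∀ j ∈ G.neighborFinset v, (G.dist i j : ℝ) = 2 - if i = j then 2 else 0 := by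
      intro j hj
      split_ifs with h
      · simp [h]
      · simp [dist_eq_two_of_adj_of_adj hG hi ((mem_neighborFinset _ _ _).mp hj) h]
    rw [sum_insert hv, sum_congr rfl hdist, sum_sub_distrib, sum_ite_eq,
      if_pos ((mem_neighborFinset _ _ _).mpr hi), sum_const, card_neighborFinset_eq_degree,
      dist_comm, dist_eq_one_iff_adj.mpr hi]
    simp only [nsmul_eq_mul, Nat.cast_one]
    ring
  have hv_row : ∑ j ∈ insert v (G.neighborFinset v), (G.dist v j : ℝ) = G.degree v := by
    rw [sum_insert hv, sum_congr rfl fun j hj ↦ by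
      rw [dist_eq_one_iff_adj.mpr ((mem_neighborFinset _ _ _).mp hj)]]
    simp
  rw [sum_insert hv, hv_row, sum_congr rfl hrow, sum_const, card_neighborFinset_eq_degree,
    nsmul_eq_mul]
  ring

end SimpleGraph

section DistanceSignlessLaplacian

variable {V : Type*} [Fintype V] [DecidableEq V] (G : SimpleGraph V)

lemma distSLMatrix_apply (i j : V) :
    distSLMatrix G i j = (if i = j then transmission G i else 0) + G.dist i j := by
  simp [distSLMatrix, distMatrix, diagonal_apply]

lemma sum_distSLMatrix_apply (i : V) : ∑ j, distSLMatrix G i j = 2 * transmission G i := by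
  simp [distSLMatrix_apply, sum_add_distrib, transmission, two_mul]

lemma blockSum_distSLMatrix_univ_right (S : Finset V) :
    blockSum (distSLMatrix G) S univ = 2 * ∑ i ∈ S, transmission G i := by
  simp only [blockSum, sum_distSLMatrix_apply, mul_sum]

lemma blockSum_distSLMatrix_self (S : Finset V) :
    blockSum (distSLMatrix G) S S =
      ∑ i ∈ S, transmission G i + ∑ i ∈ S, ∑ j ∈ S, (G.dist i j : ℝ) := by
  rw [← sum_add_distrib]
  refine sum_congr rfl fun i hi ↦ ?_
  simp [distSLMatrix_apply, sum_add_distrib, hi]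

end DistanceSignlessLaplacian

theorem stmt4_general {V : Type*} [Fintype V] [DecidableEq V] (G : SimpleGraph V) [DecidableRel G.Adj]
    (hbip : G.Colorable 2)
    (n : ℕ) (hn : n = Fintype.card V)
    (Δ : ℕ) (hΔn : Δ + 2 ≤ n)
    (W : ℝ) (hW : W = (∑ u, transmission G u) / 2)
    (v : V) (hv : G.degree v = Δ)
    (Dv tv a b : ℝ)
    (hDv : Dv = transmission G v)
    (htv : tv = (∑ u ∈ G.neighborFinset v, transmission G u) / Δ)
    (ha : a = 4*(W - Dv - tv*Δ)*(Δ + 1) + 2*n*Δ^2 + n*Dv + n*tv*Δ)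
    (hb : b = 4*Dv^2 + 8*Dv*tv*Δ + 4*tv^2*Δ^2 - 8*W*Δ^2 - 4*W*Dv - 4*W*tv*Δ) :
    Real.sqrt (a^2 + 4*b*(1 + Δ)*(n - Δ - 1)) / ((1 + Δ)*((n : ℝ) - Δ - 1)) ≤
      distSLSpread G := by
  set S := insert v (G.neighborFinset v)
  have hcardS : #S = Δ + 1 := by rw [G.card_insert_neighborFinset, hv]
  have hcardSc : (#Sᶜ : ℝ) = n - Δ - 1 := by
    rw [card_compl, hcardS, ← hn, Nat.cast_sub (by omega)]
    push_cast
    ring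
  have hq : (0 : ℝ) < n - Δ - 1 := by
    have : ((Δ + 2 : ℕ) : ℝ) ≤ n := by exact_mod_cast hΔn
    push_cast at this
    linarith
  -- if `Δ = 0` the neighbour sum is empty, so the junk value `tv = x / 0 = 0` is harmless
  have htrans : ∑ i ∈ S, transmission G i = Dv + tv * Δ := by
    rw [sum_insert (by simp), hDv, htv, ← hv, ← G.card_neighborFinset_eq_degree]
    congr 1
    exact (div_mul_cancel_of_imp fun h ↦ by
      rw [Nat.cast_eq_zero, card_eq_zero] at h
      rw [h, sum_empty]).symm
  have hquot := sqrt_blockSum_le_maxEig_sub_minEig (distSLMatrix_isHermitian G)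
    (insert_nonempty v _) (card_pos.mp (by exact_mod_cast hcardSc ▸ hq))
  rw [(distSLMatrix_isHermitian G).blockSum_compl_compl, blockSum_compl_right _ S S,
    blockSum_distSLMatrix_self, G.sum_sum_dist_insert_neighborFinset hbip,
    blockSum_distSLMatrix_univ_right, blockSum_distSLMatrix_univ_right, htrans, hv, hcardS,
    hcardSc] at hquot
  refine Eq.trans_le ?_ hquot
  rw [div_eq_iff (by positivity), ← Real.sqrt_sq (by positivity : (0 : ℝ) ≤ (1 + Δ) * (n - Δ - 1)),
    ← Real.sqrt_mul' _ (sq_nonneg _)]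
  congr 1
  rw [ha, hb, hW]
  push_cast
  field_simp
  ring

theorem stmt4 {V : Type*} [Fintype V] [DecidableEq V] (G : SimpleGraph V) [DecidableRel G.Adj]
    (hconn : G.Connected) (hbip : G.Colorable 2)
    (n : ℕ) (hn : n = Fintype.card V) (hn3 : 3 ≤ n)
    (Δ : ℕ) (hΔ : G.maxDegree = Δ) (hΔn : Δ + 2 ≤ n)
    (W : ℝ) (hW : W = (∑ u, transmission G u) / 2)
    (v : V) (hv : G.degree v = Δ)
    (Dv tv a b : ℝ)
    (hDv : Dv = transmission G v)
    (htv : tv = (∑ u ∈ G.neighborFinset v, transmission G u) / Δ)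
    (ha : a = 4*(W - Dv - tv*Δ)*(Δ + 1) + 2*n*Δ^2 + n*Dv + n*tv*Δ)
    (hb : b = 4*Dv^2 + 8*Dv*tv*Δ + 4*tv^2*Δ^2 - 8*W*Δ^2 - 4*W*Dv - 4*W*tv*Δ) :
    Real.sqrt (a^2 + 4*b*(1 + Δ)*(n - Δ - 1)) / ((1 + Δ)*((n : ℝ) - Δ - 1)) ≤
      distSLSpread G :=
  stmt4_general G hbip n hn Δ hΔn W hW v hv Dv tv a b hDv htv ha hb
end

section
/- Let n ≥ 4 and a be integers with 1 ≤ a ≤ n/2. Then the distance signless Laplacian spread of complete bipartite graphs satisfies S_𝒬(K_{a,n−a}) ≥ S_𝒬(K_{⌊n/2⌋,⌈n/2⌉}), with equality if and only if a = ⌊n/2⌋. -/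
open Finset Matrix

/-! The distance signless Laplacian `Q` of `K_{a,b}` lies in the algebra of block matrices with
blocks `p J + q I`, `r J`, `s J`, `t J + u I`, so polynomial identities in `Q` reduce to identities
between six coefficients. In this way `Q` is annihilated by
`(x - (2a+b-4)) (x - (a+2b-4)) (x² - (5(a+b)-8) x + (4a+b-4)(a+4b-4) - ab)`, whose last factor is the
characteristic polynomial of `Q` on vectors constant on the two parts. For `2 ≤ a ≤ b` the extreme
eigenvalues are the larger root of that factor and `2a+b-4`, giving
`S_𝒬(K_{a,b}) = (a + 3b + √(9(b-a)² + 4ab)) / 2`; with `a + b = n` fixed this strictly decreases as `a`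
increases to `⌊n/2⌋`. For `a = 1` the eigenvalue `2a+b-4` is absent, but the two roots of the
quadratic factor already differ by `√(9(n-2)² + 4(n-1)) > 3⌈n/2⌉ ≥ S_𝒬(K_{⌊n/2⌋,⌈n/2⌉})`. -/

open Polynomial in
theorem spectrum.isRoot_of_aeval_eq_zero {𝕜 A : Type*} [Field 𝕜] [Ring A] [Algebra 𝕜 A]
    [Nontrivial A] {a : A} {p : 𝕜[X]} (hp : aeval a p = 0) {μ : 𝕜} (hμ : μ ∈ spectrum 𝕜 a) :
    p.IsRoot μ := by
  have := spectrum.subset_polynomial_aeval a p ⟨μ, hμ, rfl⟩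
  rwa [hp, spectrum.zero_eq, Set.mem_singleton_iff] at this

theorem Matrix.mem_spectrum_of_mulVec_eq_smul {n R : Type*} [Fintype n] [DecidableEq n] [Field R]
    {A : Matrix n n R} {v : n → R} {μ : R} (hv : v ≠ 0) (h : A *ᵥ v = μ • v) :
    μ ∈ spectrum R A := by
  rw [← Matrix.spectrum_toLin', ← Module.End.hasEigenvalue_iff_mem_spectrum]
  exact Module.End.hasEigenvalue_of_hasEigenvector
    ⟨by simpa [Module.End.mem_eigenspace_iff] using h, hv⟩

section Extremal

variable {V : Type*} [Fintype V] [DecidableEq V] {A : Matrix V V ℝ} (hA : A.IsHermitian) {μ : ℝ}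
include hA

theorem le_maxEig (hμ : μ ∈ spectrum ℝ A) : μ ≤ maxEig hA := by
  obtain ⟨i, rfl⟩ := hA.spectrum_real_eq_range_eigenvalues ▸ hμ
  exact le_ciSup (Set.finite_range _).bddAbove i

theorem minEig_le (hμ : μ ∈ spectrum ℝ A) : minEig hA ≤ μ := by
  obtain ⟨i, rfl⟩ := hA.spectrum_real_eq_range_eigenvalues ▸ hμ
  exact ciInf_le (Set.finite_range _).bddBelow i

theorem maxEig_le [Nonempty V] (h : ∀ ν ∈ spectrum ℝ A, ν ≤ μ) : maxEig hA ≤ μ :=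
  ciSup_le fun i ↦ h _ (hA.eigenvalues_mem_spectrum_real i)

theorem le_minEig [Nonempty V] (h : ∀ ν ∈ spectrum ℝ A, μ ≤ ν) : μ ≤ minEig hA :=
  le_ciInf fun i ↦ h _ (hA.eigenvalues_mem_spectrum_real i)

end Extremal

section BlockAlgebra

variable {α β R : Type*} [DecidableEq α] [DecidableEq β] [CommRing R]

def blockMatrix (p q r s t u : R) : Matrix (α ⊕ β) (α ⊕ β) R :=
  Matrix.of fun
    | .inl i, .inl j => p + if i = j then q else 0
    | .inl _, .inr _ => r
    | .inr _, .inl _ => s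
    | .inr i, .inr j => t + if i = j then u else 0

theorem blockMatrix_add (p q r s t u p' q' r' s' t' u' : R) :
    (blockMatrix p q r s t u : Matrix (α ⊕ β) (α ⊕ β) R) + blockMatrix p' q' r' s' t' u' =
      blockMatrix (p + p') (q + q') (r + r') (s + s') (t + t') (u + u') := by
  ext (i | i) (j | j) <;> simp only [blockMatrix, Matrix.add_apply, Matrix.of_apply] <;>
    split_ifs <;> ring

theorem blockMatrix_sub (p q r s t u p' q' r' s' t' u' : R) :
    (blockMatrix p q r s t u : Matrix (α ⊕ β) (α ⊕ β) R) - blockMatrix p' q' r' s' t' u' =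
      blockMatrix (p - p') (q - q') (r - r') (s - s') (t - t') (u - u') := by
  ext (i | i) (j | j) <;> simp only [blockMatrix, Matrix.sub_apply, Matrix.of_apply] <;>
    split_ifs <;> ring

theorem blockMatrix_zero : (blockMatrix 0 0 0 0 0 0 : Matrix (α ⊕ β) (α ⊕ β) R) = 0 := by
  ext (i | i) (j | j) <;> simp [blockMatrix]

variable [Fintype α] [Fintype β]

theorem blockMatrix_mul (p q r s t u p' q' r' s' t' u' : R) :
    (blockMatrix p q r s t u : Matrix (α ⊕ β) (α ⊕ β) R) * blockMatrix p' q' r' s' t' u' =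
      blockMatrix
        (Fintype.card α * p * p' + p * q' + q * p' + Fintype.card β * r * s') (q * q')
        (Fintype.card α * p * r' + q * r' + Fintype.card β * r * t' + r * u')
        (Fintype.card α * s * p' + s * q' + Fintype.card β * t * s' + u * s')
        (Fintype.card α * s * r' + Fintype.card β * t * t' + t * u' + u * t') (u * u') := by
  ext (i | i) (j | j) <;>
    simp [blockMatrix, Matrix.mul_apply, Fintype.sum_sum_type, Finset.sum_add_distrib, add_mul,
      mul_add, mul_ite, ite_mul, Finset.sum_ite_eq, Finset.sum_ite_eq'] <;> ring

theorem algebraMap_eq_blockMatrix (c : R) :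
    algebraMap R (Matrix (α ⊕ β) (α ⊕ β) R) c = blockMatrix 0 c 0 0 0 c := by
  ext (i | i) (j | j) <;> simp [blockMatrix, Matrix.algebraMap_matrix_apply]

theorem blockMatrix_mulVec_elim_const (p q r s t u x y : R) :
    (blockMatrix p q r s t u : Matrix (α ⊕ β) (α ⊕ β) R) *ᵥ Sum.elim (fun _ ↦ x) (fun _ ↦ y) =
      Sum.elim (fun _ ↦ (Fintype.card α * p + q) * x + Fintype.card β * r * y)
        (fun _ ↦ Fintype.card α * s * x + (Fintype.card β * t + u) * y) := by
  ext (i | i) <;>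
    simp [blockMatrix, Matrix.mulVec, dotProduct, Fintype.sum_sum_type, Finset.sum_add_distrib,
      add_mul, ite_mul, Finset.sum_ite_eq] <;> ring

theorem blockMatrix_mulVec_elim_zero (p q r s t u : R) {x : α → R} (hx : ∑ i, x i = 0) :
    (blockMatrix p q r s t u : Matrix (α ⊕ β) (α ⊕ β) R) *ᵥ Sum.elim x 0 = q • Sum.elim x 0 := by
  ext (i | i) <;>
    simp [blockMatrix, Matrix.mulVec, dotProduct, Fintype.sum_sum_type, add_mul, ite_mul,
      Finset.sum_add_distrib, ← Finset.mul_sum, hx]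

end BlockAlgebra

namespace SimpleGraph

variable {α β : Type*}

theorem completeBipartiteGraph_dist_inl_inr (i : α) (j : β) :
    (completeBipartiteGraph α β).dist (.inl i) (.inr j) = 1 :=
  dist_eq_one_iff_adj.2 (by simp)

theorem completeBipartiteGraph_dist_inr_inl (j : β) (i : α) :
    (completeBipartiteGraph α β).dist (.inr j) (.inl i) = 1 :=
  dist_eq_one_iff_adj.2 (by simp)

theorem completeBipartiteGraph_dist_inl_inl [Nonempty β] [DecidableEq α] (i j : α) :
    (completeBipartiteGraph α β).dist (.inl i) (.inl j) = if i = j then 0 else 2 := by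
  split_ifs with h
  · simp [h]
  · obtain ⟨k⟩ := ‹Nonempty β›
    have : (completeBipartiteGraph α β).edist (.inl i) (.inl j) = 2 :=
      edist_eq_two_iff.2 ⟨by simpa using h, by simp, ⟨.inr k, by simp [mem_commonNeighbors]⟩⟩
    simp [dist, this]

theorem completeBipartiteGraph_dist_inr_inr [Nonempty α] [DecidableEq β] (i j : β) :
    (completeBipartiteGraph α β).dist (.inr i) (.inr j) = if i = j then 0 else 2 := by
  split_ifs with h
  · simp [h]
  · obtain ⟨k⟩ := ‹Nonempty α›
    have : (completeBipartiteGraph α β).edist (.inr i) (.inr j) = 2 :=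
      edist_eq_two_iff.2 ⟨by simpa using h, by simp, ⟨.inl k, by simp [mem_commonNeighbors]⟩⟩
    simp [dist, this]

end SimpleGraph

section CompleteBipartite

open SimpleGraph

variable {α β : Type*} [Fintype α] [Fintype β] [DecidableEq α] [DecidableEq β]
  [Nonempty α] [Nonempty β]

theorem distSLMatrix_completeBipartiteGraph :
    distSLMatrix (completeBipartiteGraph α β) =
      blockMatrix 2 (2 * Fintype.card α + Fintype.card β - 4 : ℝ) 1 1
        2 (Fintype.card α + 2 * Fintype.card β - 4) := by
  ext (i | i) (j | j) <;>
    simp [distSLMatrix, distMatrix, transmission, blockMatrix, Matrix.diagonal_apply,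
      Fintype.sum_sum_type, completeBipartiteGraph_dist_inl_inl, completeBipartiteGraph_dist_inr_inr,
      completeBipartiteGraph_dist_inl_inr, completeBipartiteGraph_dist_inr_inl, Finset.sum_ite,
      Finset.filter_ne, Nat.cast_sub Fintype.card_pos] <;>
    split_ifs <;> ring

end CompleteBipartite

section CompleteBipartiteSpectrum

open Polynomial

variable {a b : ℕ}

theorem aeval_distSLMatrix_completeBipartiteGraph (ha : 0 < a) (hb : 0 < b) :
    aeval (distSLMatrix (completeBipartiteGraph (Fin a) (Fin b)))
      ((X - C (2 * a + b - 4 : ℝ)) * (X - C (a + 2 * b - 4 : ℝ)) *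
        (X ^ 2 - C (5 * (a + b) - 8 : ℝ) * X +
          C ((4 * a + b - 4) * (a + 4 * b - 4) - a * b : ℝ))) = 0 := by
  have : Nonempty (Fin a) := ⟨⟨0, ha⟩⟩
  have : Nonempty (Fin b) := ⟨⟨0, hb⟩⟩
  simp only [map_mul, map_sub, map_add, aeval_X, aeval_C, pow_two,
    distSLMatrix_completeBipartiteGraph, algebraMap_eq_blockMatrix, blockMatrix_mul,
    blockMatrix_sub, blockMatrix_add, Fintype.card_fin]
  rw [← blockMatrix_zero]
  congr 1 <;> ring

theorem eq_or_eq_or_of_mem_spectrum_distSLMatrix_completeBipartiteGraph (ha : 0 < a) (hb : 0 < b)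
    {μ : ℝ} (hμ : μ ∈ spectrum ℝ (distSLMatrix (completeBipartiteGraph (Fin a) (Fin b)))) :
    μ = 2 * a + b - 4 ∨ μ = a + 2 * b - 4 ∨
      μ ^ 2 - (5 * (a + b) - 8) * μ + ((4 * a + b - 4) * (a + 4 * b - 4) - a * b) = 0 := by
  have : Nonempty (Fin a) := ⟨⟨0, ha⟩⟩
  have := spectrum.isRoot_of_aeval_eq_zero (aeval_distSLMatrix_completeBipartiteGraph ha hb) hμ
  simpa [sub_eq_zero, or_assoc] using this

theorem mem_spectrum_distSLMatrix_completeBipartiteGraph_of_quadratic (ha : 0 < a) (hb : 0 < b)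
    {r : ℝ} (hr : r ^ 2 - (5 * (a + b) - 8) * r + ((4 * a + b - 4) * (a + 4 * b - 4) - a * b) = 0) :
    r ∈ spectrum ℝ (distSLMatrix (completeBipartiteGraph (Fin a) (Fin b))) := by
  have : Nonempty (Fin a) := ⟨⟨0, ha⟩⟩
  have : Nonempty (Fin b) := ⟨⟨0, hb⟩⟩
  have hb' : (b : ℝ) ≠ 0 := by positivity
  -- `(b, r - (4a + b - 4))` is an eigenvector of the quotient matrix `!![4a + b - 4, b; a, a + 4b - 4]`.
  refine Matrix.mem_spectrum_of_mulVec_eq_smul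
    (v := Sum.elim (fun _ ↦ (b : ℝ)) fun _ ↦ r - (4 * a + b - 4))
    (fun h ↦ hb' (by simpa using congrFun h (.inl ⟨0, ha⟩))) ?_
  rw [distSLMatrix_completeBipartiteGraph, blockMatrix_mulVec_elim_const]
  ext (i | i) <;> simp only [Sum.elim_inl, Sum.elim_inr, Pi.smul_apply, smul_eq_mul,
    Fintype.card_fin]
  · ring
  · linear_combination -hr

theorem mem_spectrum_distSLMatrix_completeBipartiteGraph (ha : 2 ≤ a) (hb : 0 < b) :
    (2 * a + b - 4 : ℝ) ∈ spectrum ℝ (distSLMatrix (completeBipartiteGraph (Fin a) (Fin b))) := by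
  have : Nonempty (Fin a) := ⟨⟨0, by omega⟩⟩
  have : Nonempty (Fin b) := ⟨⟨0, hb⟩⟩
  have hij : (⟨0, by omega⟩ : Fin a) ≠ ⟨1, ha⟩ := by simp
  refine Matrix.mem_spectrum_of_mulVec_eq_smul
    (v := Sum.elim (Pi.single ⟨0, by omega⟩ 1 - Pi.single ⟨1, ha⟩ 1) 0)
    (fun h ↦ by simpa [hij] using congrFun h (.inl ⟨0, by omega⟩)) ?_
  rw [distSLMatrix_completeBipartiteGraph, blockMatrix_mulVec_elim_zero]
  · simp
  · simp [Finset.sum_sub_distrib]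

end CompleteBipartiteSpectrum

noncomputable def completeBipartiteSpread (a b : ℝ) : ℝ :=
  (a + 3 * b + √(9 * (b - a) ^ 2 + 4 * a * b)) / 2

theorem completeBipartiteSpread_le {a b : ℝ} (ha : 0 ≤ a) (hab : a ≤ b) :
    completeBipartiteSpread a b ≤ 3 * b := by
  have : √(9 * (b - a) ^ 2 + 4 * a * b) ≤ 3 * b - a := Real.sqrt_le_iff.2 ⟨by linarith, by nlinarith⟩
  rw [completeBipartiteSpread]
  linarith

theorem completeBipartiteSpread_lt_of_lt {n x y : ℝ} (hxy : x < y) (hn : x + y ≤ n) :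
    completeBipartiteSpread y (n - y) < completeBipartiteSpread x (n - x) := by
  have : √(9 * ((n - y) - y) ^ 2 + 4 * y * (n - y)) ≤ √(9 * ((n - x) - x) ^ 2 + 4 * x * (n - x)) :=
    Real.sqrt_le_sqrt (by nlinarith)
  rw [completeBipartiteSpread, completeBipartiteSpread]
  linarith

section CompleteBipartiteSpread

variable {a b : ℕ}

theorem sqrt_le_distSLSpread_completeBipartiteGraph (ha : 0 < a) (hb : 0 < b) :
    √(9 * (b - a) ^ 2 + 4 * a * b : ℝ) ≤ distSLSpread (completeBipartiteGraph (Fin a) (Fin b)) := by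
  set s := √(9 * (b - a) ^ 2 + 4 * a * b : ℝ)
  have hs : s ^ 2 = 9 * (b - a) ^ 2 + 4 * a * b := Real.sq_sqrt (by positivity)
  have hQ := distSLMatrix_isHermitian (completeBipartiteGraph (Fin a) (Fin b))
  have hmax : (5 * (a + b) - 8 + s) / 2 ≤ maxEig hQ :=
    le_maxEig hQ <| mem_spectrum_distSLMatrix_completeBipartiteGraph_of_quadratic ha hb <| by
      linear_combination hs / 4
  have hmin : minEig hQ ≤ (5 * (a + b) - 8 - s) / 2 :=
    minEig_le hQ <| mem_spectrum_distSLMatrix_completeBipartiteGraph_of_quadratic ha hb <| by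
      linear_combination hs / 4
  rw [distSLSpread]
  linarith

theorem distSLSpread_completeBipartiteGraph (ha : 2 ≤ a) (hab : a ≤ b) :
    distSLSpread (completeBipartiteGraph (Fin a) (Fin b)) =
      completeBipartiteSpread a b := by
  have : Nonempty (Fin a ⊕ Fin b) := ⟨.inl ⟨0, by omega⟩⟩
  have ha' : (2 : ℝ) ≤ a := by exact_mod_cast ha
  have hab' : (a : ℝ) ≤ b := by exact_mod_cast hab
  set s := √(9 * (b - a) ^ 2 + 4 * a * b : ℝ)
  have hs0 : 0 ≤ s := Real.sqrt_nonneg _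
  have hs : s ^ 2 = 9 * (b - a) ^ 2 + 4 * a * b := Real.sq_sqrt (by positivity)
  have hsle : s ≤ a + 3 * b := Real.sqrt_le_iff.2 ⟨by positivity, by nlinarith⟩
  have hQ := distSLMatrix_isHermitian (completeBipartiteGraph (Fin a) (Fin b))
  have hspec : ∀ μ ∈ spectrum ℝ (distSLMatrix (completeBipartiteGraph (Fin a) (Fin b))),
      2 * a + b - 4 ≤ μ ∧ μ ≤ (5 * (a + b) - 8 + s) / 2 := by
    intro μ hμ
    rcases eq_or_eq_or_of_mem_spectrum_distSLMatrix_completeBipartiteGraph (by omega) (by omega)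
      hμ with rfl | rfl | hquad
    · constructor <;> linarith
    · constructor <;> linarith
    · have : |2 * μ - (5 * (a + b) - 8)| = s := by
        rw [← Real.sqrt_sq_eq_abs]
        congr 1
        linear_combination 4 * hquad
      constructor <;> linarith [abs_le.1 this.le]
  have hmax : maxEig hQ = (5 * (a + b) - 8 + s) / 2 :=
    le_antisymm (maxEig_le hQ fun μ hμ ↦ (hspec μ hμ).2) <| le_maxEig hQ <|
      mem_spectrum_distSLMatrix_completeBipartiteGraph_of_quadratic (by omega) (by omega) <| by
        linear_combination hs / 4
  have hmin : minEig hQ = 2 * a + b - 4 :=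
    le_antisymm (minEig_le hQ <| mem_spectrum_distSLMatrix_completeBipartiteGraph ha (by omega))
      (le_minEig hQ fun μ hμ ↦ (hspec μ hμ).1)
  rw [distSLSpread, hmax, hmin, completeBipartiteSpread]
  ring

end CompleteBipartiteSpread

theorem stmt12 (n a : ℕ) (hn : 4 ≤ n) (ha1 : 1 ≤ a) (ha2 : 2*a ≤ n) :
    distSLSpread (completeBipartiteGraph (Fin (n / 2)) (Fin (n - n / 2))) ≤
      distSLSpread (completeBipartiteGraph (Fin a) (Fin (n - a))) ∧
    (distSLSpread (completeBipartiteGraph (Fin a) (Fin (n - a))) =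
        distSLSpread (completeBipartiteGraph (Fin (n / 2)) (Fin (n - n / 2))) ↔ a = n / 2) := by
  set m := n / 2
  have hSm := distSLSpread_completeBipartiteGraph (a := m) (b := n - m) (by omega) (by omega)
  rw [Nat.cast_sub (by omega)] at hSm
  obtain rfl | ham := (show a ≤ m by omega).eq_or_lt
  · simp
  suffices hlt : distSLSpread (completeBipartiteGraph (Fin m) (Fin (n - m))) <
      distSLSpread (completeBipartiteGraph (Fin a) (Fin (n - a))) from
    ⟨hlt.le, iff_of_false hlt.ne' ham.ne⟩
  have hm : (2 : ℝ) ≤ m := by exact_mod_cast (show 2 ≤ m by omega)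
  have hmn : 2 * (m : ℝ) ≤ n := by exact_mod_cast (show 2 * m ≤ n by omega)
  obtain rfl | ha := ha1.eq_or_lt
  · calc _ ≤ 3 * ((n : ℝ) - m) := hSm ▸ completeBipartiteSpread_le (by positivity) (by linarith)
      _ < √(9 * ((n - 1 : ℕ) - 1) ^ 2 + 4 * 1 * (n - 1 : ℕ) : ℝ) := by
        rw [Nat.cast_sub (by omega), Nat.cast_one]
        exact Real.lt_sqrt (by linarith) |>.2 (by nlinarith)
      _ ≤ _ := by exact_mod_cast sqrt_le_distSLSpread_completeBipartiteGraph one_pos (by omega)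
  · rw [hSm, distSLSpread_completeBipartiteGraph ha (by omega), Nat.cast_sub (by omega)]
    exact completeBipartiteSpread_lt_of_lt (by exact_mod_cast ham)
      (by exact_mod_cast (show a + m ≤ n by omega))
end
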